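/- arXiv:1102.0423 — 4 statements merged into one kernel-verified Lean document; each statement's English description precedes it below -/
import Mathlib

section
/- Let Γ be a group normally generated by a finite set S = S⁻¹, and let G be a group equipped with a bi-invariant norm ‖·‖. Then every homomorphism ψ : Γ → G is Lipschitz with respect to the bi-invariant word norm on Γ: there exists a positive constant μ ∈ ℝ such that ‖ψ(g)‖ ≤ μ·|g|_{S̄} for every g ∈ Γ. -/
/-- The set of all conjugates of elements of `S`. -/
def conjSet {G : Type*} [Group G] (S : Set G) : Set G :=
  {x | ∃ g : G, ∃ s ∈ S, x = g * s * g⁻¹}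

/-- The word norm of `g` with respect to a generating set `T`:
the least length of a word in elements of `T` expressing `g`. -/
noncomputable def wordNorm {G : Type*} [Group G] (T : Set G) (g : G) : ℕ :=
  sInf {k | ∃ l : List G, (∀ x ∈ l, x ∈ T) ∧ l.prod = g ∧ l.length = k}

/-- A bi-invariant norm on a group `G`. -/
structure IsBiInvNorm {G : Type*} [Group G] (ν : G → ℝ) : Prop where
  nonneg : ∀ g, 0 ≤ ν g
  eq_zero_iff : ∀ g, ν g = 0 ↔ g = 1
  mul_le : ∀ g h, ν (g * h) ≤ ν g + ν h
  inv_eq : ∀ g, ν g⁻¹ = ν g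
  conj_eq : ∀ g h, ν (h * g * h⁻¹) = ν g

lemma conjSet_inv {G : Type*} [Group G] {S : Set G} (hinv : S⁻¹ = S) {x : G}
    (hx : x⁻¹ ∈ conjSet S) : x ∈ conjSet S := by
  obtain ⟨g, s, hs, h⟩ := hx
  refine ⟨g, s⁻¹, ?_, ?_⟩
  · rw [← hinv]; exact Set.inv_mem_inv.mpr hs
  · have : x = (g * s * g⁻¹)⁻¹ := by rw [← h]; simp
    rw [this]; group

lemma list_norm_bound {Γ G : Type*} [Group Γ] [Group G] (ν : G → ℝ) (hν : IsBiInvNorm ν)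
    (ψ : Γ →* G) (μ : ℝ) (T : Set Γ) (hT : ∀ x ∈ T, ν (ψ x) ≤ μ) :
    ∀ l : List Γ, (∀ x ∈ l, x ∈ T) → ν (ψ l.prod) ≤ μ * l.length := by
  intro l
  induction l with
  | nil =>
    intro _
    simp only [List.prod_nil, map_one, List.length_nil, Nat.cast_zero, mul_zero]
    exact le_of_eq ((hν.eq_zero_iff 1).mpr rfl)
  | cons a l ih =>
    intro h
    have h1 : ν (ψ a) ≤ μ := hT a (h a (by simp))
    have h2 : ν (ψ l.prod) ≤ μ * l.length := ih (fun x hx => h x (by simp [hx]))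
    calc ν (ψ (a :: l).prod) = ν (ψ a * ψ l.prod) := by simp
      _ ≤ ν (ψ a) + ν (ψ l.prod) := hν.mul_le _ _
      _ ≤ μ + μ * l.length := add_le_add h1 h2
      _ = μ * (a :: l).length := by push_cast [List.length_cons]; ring

/-- A homomorphism from a group normally generated by a finite symmetric set,
to a group with a bi-invariant norm, is Lipschitz with respect to the
bi-invariant word norm. -/
theorem hom_lipschitz_biinvariant_word_norm {Γ G : Type*} [Group Γ] [Group G]
    (S : Set Γ) (hfin : S.Finite) (hinv : S⁻¹ = S)
    (hgen : Subgroup.closure (conjSet S) = ⊤)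
    (ν : G → ℝ) (hν : IsBiInvNorm ν) (ψ : Γ →* G) :
    ∃ μ : ℝ, 0 < μ ∧ ∀ g : Γ, ν (ψ g) ≤ μ * (wordNorm (conjSet S) g : ℝ) := by
  set μ : ℝ := 1 + ∑ s ∈ hfin.toFinset, ν (ψ s) with hμ
  have hsum : (0:ℝ) ≤ ∑ s ∈ hfin.toFinset, ν (ψ s) :=
    Finset.sum_nonneg fun s _ => hν.nonneg _
  have hμpos : 0 < μ := by positivity
  refine ⟨μ, hμpos, fun g => ?_⟩
  -- every element of conjSet S has small norm
  have hbound : ∀ x ∈ conjSet S, ν (ψ x) ≤ μ := by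
    rintro x ⟨h, s, hs, rfl⟩
    have : ψ (h * s * h⁻¹) = ψ h * ψ s * (ψ h)⁻¹ := by simp
    rw [this, hν.conj_eq]
    calc ν (ψ s) ≤ ∑ t ∈ hfin.toFinset, ν (ψ t) :=
          Finset.single_le_sum (fun t _ => hν.nonneg (ψ t)) (hfin.mem_toFinset.mpr hs)
      _ ≤ μ := by linarith
  -- the defining set of the word norm is nonempty
  have hg : g ∈ Subgroup.closure (conjSet S) := hgen ▸ Subgroup.mem_top g
  have hg' : g ∈ Submonoid.closure (conjSet S ∪ (conjSet S)⁻¹) := by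
    rw [← Subgroup.closure_toSubmonoid]; exact hg
  obtain ⟨l, hl, hprod⟩ := Submonoid.exists_list_of_mem_closure hg'
  have hl' : ∀ x ∈ l, x ∈ conjSet S := by
    intro x hx
    rcases hl x hx with h | h
    · exact h
    · exact conjSet_inv hinv h
  have hne : {k | ∃ l : List Γ, (∀ x ∈ l, x ∈ conjSet S) ∧ l.prod = g ∧ l.length = k}.Nonempty :=
    ⟨l.length, l, hl', hprod, rfl⟩
  obtain ⟨m, hm, hmprod, hmlen⟩ := Nat.sInf_mem hne
  rw [← wordNorm, ← hmprod] at *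
  rw [← hmlen]
  exact list_norm_bound ν hν ψ μ (conjSet S) hbound m hm
end

section
/- Let Γ be a perfect group generated by a finite set S = S⁻¹. Then there exists a constant ν > 0 such that cl(g) ≤ ν·|g|_{S̄} for every g ∈ Γ, where cl denotes the commutator length. -/
/-!
Every conjugate of a generator `s ∈ S` has commutator length `cl(s)`, since a conjugate of a
commutator is a commutator. As `S` is finite, `C := max_{s ∈ S} cl(s)` exists, and writing `g` as a
product of `|g|_{S̄}` conjugates of generators gives `cl(g) ≤ C · |g|_{S̄}` by subadditivity of `cl`.
-/

namespace wordNorm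

variable {G : Type*} [Group G] {T : Set G}

theorem le_length (l : List G) (hl : ∀ x ∈ l, x ∈ T) : wordNorm T l.prod ≤ l.length :=
  Nat.sInf_le ⟨l, hl, rfl, rfl⟩

theorem exists_list_length_eq {g : G} (hg : g ∈ Submonoid.closure T) :
    ∃ l : List G, (∀ x ∈ l, x ∈ T) ∧ l.prod = g ∧ l.length = wordNorm T g := by
  obtain ⟨l, hl, hprod⟩ := Submonoid.exists_list_of_mem_closure hg
  have hne : {k | ∃ l : List G, (∀ x ∈ l, x ∈ T) ∧ l.prod = g ∧ l.length = k}.Nonempty :=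
    ⟨l.length, l, hl, hprod, rfl⟩
  exact Nat.sInf_mem hne

theorem mul_le {a b : G} (ha : a ∈ Submonoid.closure T) (hb : b ∈ Submonoid.closure T) :
    wordNorm T (a * b) ≤ wordNorm T a + wordNorm T b := by
  obtain ⟨la, hla, rfl, hla_len⟩ := exists_list_length_eq ha
  obtain ⟨lb, hlb, rfl, hlb_len⟩ := exists_list_length_eq hb
  rw [← hla_len, ← hlb_len, ← List.prod_append, ← List.length_append]
  exact le_length _ fun x hx => (List.mem_append.mp hx).elim (hla x) (hlb x)

theorem list_prod_le_sum (hT : Submonoid.closure T = ⊤) (l : List G) :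
    wordNorm T l.prod ≤ (l.map (wordNorm T)).sum := by
  induction l with
  | nil => exact le_length [] (by simp)
  | cons a l ih =>
    rw [List.prod_cons, List.map_cons, List.sum_cons]
    exact (mul_le (hT ▸ trivial) (hT ▸ trivial)).trans (Nat.add_le_add_left ih _)

theorem conj_le (hT : ∀ t ∈ T, ∀ h : G, h * t * h⁻¹ ∈ T) {g : G}
    (hg : g ∈ Submonoid.closure T) (h : G) : wordNorm T (h * g * h⁻¹) ≤ wordNorm T g := by
  obtain ⟨l, hl, rfl, hl_len⟩ := exists_list_length_eq hg
  rw [← MulAut.conj_apply, map_list_prod, ← hl_len, ← l.length_map (MulAut.conj h)]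
  refine le_length _ fun x hx => ?_
  obtain ⟨t, ht, rfl⟩ := List.mem_map.mp hx
  exact hT t (hl t ht) h

theorem le_mul_of_forall_le (hT : Submonoid.closure T = ⊤) {U : Set G} {C : ℕ}
    (hU : ∀ u ∈ U, wordNorm T u ≤ C) {g : G} (hg : g ∈ Submonoid.closure U) :
    wordNorm T g ≤ C * wordNorm U g := by
  obtain ⟨l, hl, rfl, hl_len⟩ := exists_list_length_eq hg
  calc wordNorm T l.prod ≤ (l.map (wordNorm T)).sum := list_prod_le_sum hT l
    _ ≤ (l.map (wordNorm T)).length • C :=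
      List.sum_le_card_nsmul _ _ fun n hn => by
        obtain ⟨u, hu, rfl⟩ := List.mem_map.mp hn
        exact hU u (hl u hu)
    _ = C * wordNorm U l.prod := by rw [List.length_map, hl_len, smul_eq_mul, mul_comm]

end wordNorm

theorem Submonoid.closure_eq_top_of_inv_eq {G : Type*} [Group G] {S : Set G} (hinv : S⁻¹ = S)
    (hgen : Subgroup.closure S = ⊤) : Submonoid.closure S = ⊤ := by
  have h := Subgroup.closure_toSubmonoid S
  rwa [hinv, Set.union_self, hgen, Subgroup.top_toSubmonoid, eq_comm] at h

theorem inv_mem_commutatorSet {G : Type*} [Group G] {x : G} (hx : x ∈ commutatorSet G) :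
    x⁻¹ ∈ commutatorSet G := by
  obtain ⟨a, b, rfl⟩ := hx
  rw [commutatorElement_inv]
  exact commutator_mem_commutatorSet _ _

theorem inv_commutatorSet (G : Type*) [Group G] : (commutatorSet G)⁻¹ = commutatorSet G :=
  Set.ext fun x => ⟨fun hx => inv_inv x ▸ inv_mem_commutatorSet hx, inv_mem_commutatorSet⟩

theorem conj_mem_commutatorSet {G : Type*} [Group G] {x : G} (hx : x ∈ commutatorSet G) (h : G) :
    h * x * h⁻¹ ∈ commutatorSet G := by
  obtain ⟨a, b, rfl⟩ := hx
  rw [← MulAut.conj_apply, map_commutatorElement]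
  exact commutator_mem_commutatorSet _ _

theorem subset_conjSet {G : Type*} [Group G] (S : Set G) : S ⊆ conjSet S :=
  fun s hs => ⟨1, s, hs, by group⟩

/-- On a perfect group generated by a finite symmetric set S, the commutator
length is Lipschitz with respect to the bi-invariant word norm. -/
theorem commutator_length_lipschitz {Γ : Type*} [Group Γ]
    (S : Set Γ) (hfin : S.Finite) (hinv : S⁻¹ = S)
    (hgen : Subgroup.closure S = ⊤)
    (hperf : commutator Γ = ⊤) :
    ∃ ν : ℝ, 0 < ν ∧ ∀ g : Γ,
      (wordNorm (commutatorSet Γ) g : ℝ) ≤ ν * (wordNorm (conjSet S) g : ℝ) := by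
  have hcomm : Submonoid.closure (commutatorSet Γ) = ⊤ :=
    Submonoid.closure_eq_top_of_inv_eq (inv_commutatorSet Γ) (commutator_eq_closure Γ ▸ hperf)
  have hconj : Submonoid.closure (conjSet S) = ⊤ :=
    top_le_iff.mp <| Submonoid.closure_eq_top_of_inv_eq hinv hgen ▸
      Submonoid.closure_mono (subset_conjSet S)
  obtain ⟨C, hC⟩ := (hfin.image (wordNorm (commutatorSet Γ))).bddAbove
  have hconj_le : ∀ x ∈ conjSet S, wordNorm (commutatorSet Γ) x ≤ C := by
    rintro _ ⟨h, s, hs, rfl⟩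
    exact (wordNorm.conj_le (fun _ ht => conj_mem_commutatorSet ht) (hcomm ▸ trivial) h).trans
      (hC ⟨s, hs, rfl⟩)
  refine ⟨C + 1, by positivity, fun g => ?_⟩
  calc (wordNorm (commutatorSet Γ) g : ℝ) ≤ (C * wordNorm (conjSet S) g : ℕ) :=
        Nat.cast_le.mpr (wordNorm.le_mul_of_forall_le hcomm hconj_le (hconj ▸ trivial))
    _ ≤ (C + 1) * (wordNorm (conjSet S) g : ℝ) := by push_cast; gcongr; linarith
end

section
/- Let K → Γ̂ → Γ be a group extension (K a normal subgroup of Γ̂ with quotient Γ), where Γ̂ is normally generated by a finite set and the subgroup K is a bounded subset of Γ̂ with respect to the bi-invariant word norm. Then Γ̂ is bounded with respect to its bi-invariant word norm if and only if Γ is bounded with respect to its bi-invariant word norm. In particular, an extension of a bounded normally finitely generated group by a finite group is bounded. -/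
/-!
Words in the conjugates of `S` map to words in the conjugates of their images, and every such
word in `G ⧸ K` lifts letter by letter. So the quotient map does not increase the norm, and every
product of such conjugates in the quotient has a preimage of no larger norm. If the quotient is bounded by `C`, lift
a shortest word for the image of `g` to some `g'` with `|g'| ≤ C`; then `g'⁻¹ * g ∈ K`, whence
`|g| ≤ |g'| + |g'⁻¹ * g| ≤ C + κ`.
-/

theorem List.exists_map_eq_of_forall_mem_image {α β : Type*} {f : α → β} {s : Set α}
    {m : List β} (hm : ∀ y ∈ m, y ∈ f '' s) : ∃ l : List α, (∀ x ∈ l, x ∈ s) ∧ l.map f = m := by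
  induction m with
  | nil => exact ⟨[], by simp, rfl⟩
  | cons y m ih =>
    obtain ⟨x, hx, rfl⟩ := hm y List.mem_cons_self
    obtain ⟨l, hl, rfl⟩ := ih fun z hz => hm z (List.mem_cons_of_mem _ hz)
    exact ⟨x :: l, List.forall_mem_cons.mpr ⟨hx, hl⟩, rfl⟩

section WordNorm

variable {G H : Type*} [Group G] [Group H] {T : Set G} {g : G}

lemma wordNorm_le_length {l : List G} (hl : ∀ x ∈ l, x ∈ T) (hg : l.prod = g) :
    wordNorm T g ≤ l.length :=
  Nat.sInf_le ⟨l, hl, hg, rfl⟩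

/-- `wordNorm` takes the junk value `sInf ∅ = 0` outside the submonoid generated by `T`. -/
lemma wordNorm_eq_zero_of_notMem_closure (hg : g ∉ Submonoid.closure T) : wordNorm T g = 0 := by
  rw [wordNorm, Nat.sInf_eq_zero]
  refine Or.inr (Set.eq_empty_of_forall_notMem ?_)
  rintro k ⟨l, hl, rfl, -⟩
  exact hg (Submonoid.list_prod_mem _ fun x hx => Submonoid.subset_closure (hl x hx))

lemma exists_list_length_eq_wordNorm (hg : g ∈ Submonoid.closure T) :
    ∃ l : List G, (∀ x ∈ l, x ∈ T) ∧ l.prod = g ∧ l.length = wordNorm T g := by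
  obtain ⟨l, hl, hprod⟩ := Submonoid.exists_list_of_mem_closure hg
  exact Nat.sInf_mem (s := {k | ∃ l : List G, (∀ x ∈ l, x ∈ T) ∧ l.prod = g ∧ l.length = k})
    ⟨l.length, l, hl, hprod, rfl⟩

lemma wordNorm_mul_le {h : G} (hg : g ∈ Submonoid.closure T) (hh : h ∈ Submonoid.closure T) :
    wordNorm T (g * h) ≤ wordNorm T g + wordNorm T h := by
  obtain ⟨l, hl, rfl, hlen⟩ := exists_list_length_eq_wordNorm hg
  obtain ⟨m, hm, rfl, hmlen⟩ := exists_list_length_eq_wordNorm hh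
  rw [← hlen, ← hmlen, ← List.length_append]
  refine wordNorm_le_length (fun x hx => ?_) List.prod_append
  exact (List.mem_append.mp hx).elim (hl x) (hm x)

lemma wordNorm_map_le (f : G →* H) (hg : g ∈ Submonoid.closure T) :
    wordNorm (f '' T) (f g) ≤ wordNorm T g := by
  obtain ⟨l, hl, rfl, hlen⟩ := exists_list_length_eq_wordNorm hg
  rw [← hlen, ← List.length_map (f := f), map_list_prod]
  refine wordNorm_le_length (fun y hy => ?_) rfl
  obtain ⟨x, hx, rfl⟩ := List.mem_map.mp hy
  exact Set.mem_image_of_mem f (hl x hx)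

lemma exists_map_eq_and_wordNorm_le (f : G →* H) {y : H} (hy : y ∈ Submonoid.closure (f '' T)) :
    ∃ g ∈ Submonoid.closure T, f g = y ∧ wordNorm T g ≤ wordNorm (f '' T) y := by
  obtain ⟨m, hm, rfl, hmlen⟩ := exists_list_length_eq_wordNorm hy
  obtain ⟨l, hl, rfl⟩ := List.exists_map_eq_of_forall_mem_image hm
  refine ⟨l.prod, Submonoid.list_prod_mem _ fun x hx => Submonoid.subset_closure (hl x hx),
    map_list_prod f l, ?_⟩
  rw [← hmlen, List.length_map]
  exact wordNorm_le_length hl rfl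

lemma wordNorm_image_le_of_forall_le (f : G →* H) {C : ℕ} (hC : ∀ g, wordNorm T g ≤ C) (y : H) :
    wordNorm (f '' T) y ≤ C := by
  by_cases hy : y ∈ Submonoid.closure (f '' T)
  · rw [← MonoidHom.map_mclosure] at hy
    obtain ⟨g, hg, rfl⟩ := hy
    exact (wordNorm_map_le f hg).trans (hC g)
  · simp [wordNorm_eq_zero_of_notMem_closure hy]

lemma wordNorm_le_add_of_forall_le (f : G →* H) (hT : T⁻¹ = T) {C κ : ℕ}
    (hC : ∀ y, wordNorm (f '' T) y ≤ C) (hκ : ∀ k ∈ f.ker, wordNorm T k ≤ κ) (g : G) :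
    wordNorm T g ≤ C + κ := by
  by_cases hg : g ∈ Submonoid.closure T
  · have hfg : f g ∈ Submonoid.closure (f '' T) :=
      MonoidHom.map_mclosure f T ▸ Submonoid.mem_map_of_mem f hg
    obtain ⟨g', hg', hfg', hg'_le⟩ := exists_map_eq_and_wordNorm_le f hfg
    have hk_ker : g'⁻¹ * g ∈ f.ker := by simp [MonoidHom.mem_ker, hfg']
    have hk_closure : g'⁻¹ * g ∈ Submonoid.closure T :=
      mul_mem ((Submonoid.mem_closure_inv T g').mp (by rwa [hT])) hg
    calc wordNorm T g = wordNorm T (g' * (g'⁻¹ * g)) := by rw [mul_inv_cancel_left]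
      _ ≤ wordNorm T g' + wordNorm T (g'⁻¹ * g) := wordNorm_mul_le hg' hk_closure
      _ ≤ C + κ := add_le_add (hg'_le.trans (hC _)) (hκ _ hk_ker)
  · simp [wordNorm_eq_zero_of_notMem_closure hg]

end WordNorm

lemma conjSet_inv_s13 {G : Type*} [Group G] {S : Set G} (hS : S⁻¹ = S) :
    (conjSet S)⁻¹ = conjSet S := by
  have inv_mem : ∀ x ∈ conjSet S, x⁻¹ ∈ conjSet S := by
    rintro _ ⟨g, s, hs, rfl⟩
    exact ⟨g, s⁻¹, Set.mem_inv.mp (hS.symm ▸ hs), by group⟩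
  exact Set.Subset.antisymm (fun x hx => by simpa using inv_mem _ hx) inv_mem

lemma MonoidHom.image_conjSet {G H : Type*} [Group G] [Group H] (f : G →* H)
    (hf : Function.Surjective f) (S : Set G) : f '' conjSet S = conjSet (f '' S) := by
  ext y
  constructor
  · rintro ⟨_, ⟨g, s, hs, rfl⟩, rfl⟩
    exact ⟨f g, f s, Set.mem_image_of_mem f hs, by simp⟩
  · rintro ⟨h, _, ⟨s, hs, rfl⟩, rfl⟩
    obtain ⟨g, rfl⟩ := hf h
    exact ⟨g * s * g⁻¹, ⟨g, s, hs, rfl⟩, by simp⟩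

theorem extension_bounded_iff_quotient_bounded_general {G : Type*} [Group G]
    (K : Subgroup G) [K.Normal]
    (S : Set G) (hinv : S⁻¹ = S)
    (hK : ∃ κ : ℕ, ∀ k ∈ K, wordNorm (conjSet S) k ≤ κ) :
    (∃ C : ℕ, ∀ g : G, wordNorm (conjSet S) g ≤ C) ↔
    (∃ C : ℕ, ∀ x : G ⧸ K,
      wordNorm (conjSet ((QuotientGroup.mk : G → G ⧸ K) '' S)) x ≤ C) := by
  have himage : QuotientGroup.mk' K '' conjSet S = conjSet ((QuotientGroup.mk : G → G ⧸ K) '' S) :=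
    (QuotientGroup.mk' K).image_conjSet (QuotientGroup.mk'_surjective K) S
  rw [← himage]
  constructor
  · rintro ⟨C, hC⟩
    exact ⟨C, wordNorm_image_le_of_forall_le _ hC⟩
  · rintro ⟨C, hC⟩
    obtain ⟨κ, hκ⟩ := hK
    refine ⟨C + κ, wordNorm_le_add_of_forall_le _ (conjSet_inv_s13 hinv) hC ?_⟩
    rwa [QuotientGroup.ker_mk']

/-- For an extension K → Γ̂ → Γ with Γ̂ normally generated by a finite symmetric
set and with bounded kernel K, the group Γ̂ is bounded in its bi-invariant word
norm if and only if the quotient Γ = Γ̂/K is bounded in its bi-invariant word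
norm. -/
theorem extension_bounded_iff_quotient_bounded {G : Type*} [Group G]
    (K : Subgroup G) [K.Normal]
    (S : Set G) (hfin : S.Finite) (hinv : S⁻¹ = S)
    (hgen : Subgroup.closure (conjSet S) = ⊤)
    (hK : ∃ κ : ℕ, ∀ k ∈ K, wordNorm (conjSet S) k ≤ κ) :
    (∃ C : ℕ, ∀ g : G, wordNorm (conjSet S) g ≤ C) ↔
    (∃ C : ℕ, ∀ x : G ⧸ K,
      wordNorm (conjSet ((QuotientGroup.mk : G → G ⧸ K) '' S)) x ≤ C) :=
  extension_bounded_iff_quotient_bounded_general K S hinv hK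
end

section
/- Let n ≥ 3 and let SL(n,ℤ) be generated by the set S of elementary matrices E_{pq}(±1) (p ≠ q), where E_{pq}(a) denotes the transvection differing from the identity matrix only by the entry a in position (p,q). Then for all indices i ≠ j and all integers r and k, the power E_{ij}(r)^k of the elementary matrix E_{ij}(r) satisfies |E_{ij}(r)^k|_{S̄} ≤ 2; i.e., every power of every elementary matrix is a product of at most two conjugates of elements of S. -/
/-- The elementary transvection E_{ij}(a) ∈ SL(n,ℤ), equal to the identity matrix
except for the entry a in position (i,j). -/
def elemMat {n : ℕ} (i j : Fin n) (h : i ≠ j) (a : ℤ) :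
    Matrix.SpecialLinearGroup (Fin n) ℤ :=
  ⟨Matrix.transvection i j a, by simpa using Matrix.det_transvection_of_ne i j h a⟩

/-!
Since `n ≥ 3` there is an index `l ∉ {i, j}`, and the Steinberg relation
`E_{ij}(c) = ⁅E_{il}(c), E_{lj}(1)⁆` applied to `c = k r` writes
`E_{ij}(r)^k = (E_{il}(c) E_{lj}(1) E_{il}(c)⁻¹) · E_{lj}(-1)`,
a product of a conjugate of `E_{lj}(1)` and the generator `E_{lj}(-1)`.
-/

section ConjSet

variable {G : Type*} [Group G] {S : Set G}

lemma conj_mem_conjSet (g : G) {s : G} (hs : s ∈ S) : g * s * g⁻¹ ∈ conjSet S :=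
  ⟨g, s, hs, rfl⟩

lemma subset_conjSet_s16 : S ⊆ conjSet S :=
  fun s hs => ⟨1, s, hs, by group⟩

lemma wordNorm_mul_le_two {x y : G} (hx : x ∈ S) (hy : y ∈ S) : wordNorm S (x * y) ≤ 2 :=
  Nat.sInf_le ⟨[x, y], by simp [hx, hy], by simp, rfl⟩

end ConjSet

namespace Matrix

variable {ι R : Type*} [Fintype ι] [DecidableEq ι] [CommRing R]

theorem transvection_commutator {i j l : ι} (hij : i ≠ j) (hil : i ≠ l) (hlj : l ≠ j)
    (a b : R) :
    transvection i l a * transvection l j b * transvection i l (-a) * transvection l j (-b) =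
      transvection i j (a * b) := by
  simp only [transvection, ← single_neg, Matrix.add_mul, Matrix.mul_add, Matrix.one_mul,
    Matrix.mul_one, Matrix.neg_mul, Matrix.mul_neg, single_mul_single_same,
    single_mul_single_of_ne _ _ _ _ hil.symm, single_mul_single_of_ne _ _ _ _ hij.symm,
    single_mul_single_of_ne _ _ _ _ hlj.symm, add_zero]
  abel

end Matrix

section elemMat

open scoped commutatorElement

variable {n : ℕ}

lemma elemMat_mul (i j : Fin n) (h : i ≠ j) (a b : ℤ) :
    elemMat i j h a * elemMat i j h b = elemMat i j h (a + b) :=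
  Subtype.ext (Matrix.transvection_mul_transvection_same i j h a b)

lemma elemMat_zero (i j : Fin n) (h : i ≠ j) : elemMat i j h 0 = 1 :=
  Subtype.ext (Matrix.transvection_zero i j)

lemma elemMat_inv (i j : Fin n) (h : i ≠ j) (a : ℤ) :
    (elemMat i j h a)⁻¹ = elemMat i j h (-a) :=
  inv_eq_of_mul_eq_one_right (by rw [elemMat_mul, add_neg_cancel, elemMat_zero])

lemma elemMat_zpow (i j : Fin n) (h : i ≠ j) (r k : ℤ) :
    elemMat i j h r ^ k = elemMat i j h (k * r) := by
  induction k using Int.induction_on with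
  | zero => rw [zpow_zero, zero_mul, elemMat_zero]
  | succ m ih => rw [zpow_add_one, ih, elemMat_mul, add_mul, one_mul]
  | pred m ih => rw [zpow_sub_one, ih, elemMat_inv, elemMat_mul, sub_mul, one_mul, sub_eq_add_neg]

lemma elemMat_commutator {i j l : Fin n} (hij : i ≠ j) (hil : i ≠ l) (hlj : l ≠ j) (a b : ℤ) :
    ⁅elemMat i l hil a, elemMat l j hlj b⁆ = elemMat i j hij (a * b) := by
  rw [commutatorElement_def, elemMat_inv, elemMat_inv]
  exact Subtype.ext (Matrix.transvection_commutator hij hil hlj a b)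

end elemMat

/-- For n ≥ 3 and S the set of elementary matrices E_{pq}(±1) in SL(n,ℤ), every
power of every elementary matrix E_{ij}(r) is a product of at most two
conjugates of elements of S. -/
theorem elementary_matrix_powers_bounded (n : ℕ) (hn : 3 ≤ n)
    (S : Set (Matrix.SpecialLinearGroup (Fin n) ℤ))
    (hS : S = {M | ∃ p q : Fin n, ∃ h : p ≠ q,
      M = elemMat p q h 1 ∨ M = elemMat p q h (-1)})
    (i j : Fin n) (hij : i ≠ j) (r k : ℤ) :
    wordNorm (conjSet S) ((elemMat i j hij r) ^ k) ≤ 2 := by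
  obtain ⟨l, hli, hlj⟩ := Fin.exists_ne_and_ne_of_two_lt i j (by omega)
  have hil : i ≠ l := hli.symm
  have hplus : elemMat l j hlj 1 ∈ S := hS ▸ ⟨l, j, hlj, Or.inl rfl⟩
  have hminus : elemMat l j hlj (-1) ∈ S := hS ▸ ⟨l, j, hlj, Or.inr rfl⟩
  have hpow : elemMat i j hij r ^ k = elemMat i l hil (k * r) * elemMat l j hlj 1 *
      (elemMat i l hil (k * r))⁻¹ * elemMat l j hlj (-1) := by
    have h := elemMat_commutator hij hil hlj (k * r) 1
    rw [mul_one, commutatorElement_def, elemMat_inv l j] at h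
    rw [elemMat_zpow, h]
  rw [hpow]
  exact wordNorm_mul_le_two (conj_mem_conjSet _ hplus) (subset_conjSet_s16 hminus)
end
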